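/- (Uniform recurrence on compact sets.) Let E : ℕ → ℝ be a sequence of real numbers and for t ∈ ℝ let U_t denote the time-evolution map on ℓ²(ℕ, ℂ) given by (U_t c)ₙ = exp(-i·Eₙ·t)·cₙ. Let X ⊆ ℓ²(ℕ, ℂ) be a compact set. Then for every δ > 0 and every τ > 0 there exists a single time T > τ such that ‖c - U_T c‖ < δ for all c ∈ X simultaneously. -/

import Mathlib

/-!
Each `U_t` is an isometry, so by a finite `δ/3`-net of `X` it suffices to find a single return
time for finitely many states. Each of those is, up to a small `ℓ²` tail, supported on finitely
many coordinates, and there the phases `exp (-i Eₙ t)` return simultaneously close to `1` along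
an arithmetic progression of times: in a compact group with an invariant metric, some power of
every element is arbitrarily close to `1` (two terms of a convergent subsequence of its powers).
-/

open scoped ENNReal

/-- The time-evolution map `U_t` on `ℓ²(ℕ, ℂ)`: `(U_t c)ₙ = exp(-i·Eₙ·t)·cₙ`. -/
noncomputable def timeEvol (E : ℕ → ℝ) (t : ℝ) (c : lp (fun _ : ℕ => ℂ) 2) :
    lp (fun _ : ℕ => ℂ) 2 :=
  ⟨fun n => Complex.exp ((-(E n * t) : ℝ) * Complex.I) * (c : ∀ _ : ℕ, ℂ) n, by
    apply memℓp_gen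
    have hs : Summable fun n : ℕ => ‖(c : ∀ _ : ℕ, ℂ) n‖ ^ (2 : ℝ≥0∞).toReal :=
      (lp.memℓp c).summable (by norm_num)
    refine hs.congr fun n => ?_
    simp [norm_mul, Complex.norm_exp]⟩

open Filter Topology

section lp

variable {ι : Type*} {F : ι → Type*} [∀ i, NormedAddCommGroup (F i)]

lemma lp.summable_norm_sq (f : lp F 2) : Summable fun i => ‖f i‖ ^ 2 := by
  simpa using (lp.memℓp f).summable (by norm_num : 0 < (2 : ℝ≥0∞).toReal)

lemma lp.norm_sq_eq_tsum (f : lp F 2) : ‖f‖ ^ 2 = ∑' i, ‖f i‖ ^ 2 := by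
  simpa using lp.norm_rpow_eq_tsum (by norm_num : 0 < (2 : ℝ≥0∞).toReal) f

end lp

instance Circle.instIsIsometricSMul : IsIsometricSMul Circle Circle :=
  ⟨fun a => Isometry.of_dist_eq fun b c => by
    change dist ((a * b : Circle) : ℂ) ((a * c : Circle) : ℂ) = dist (b : ℂ) c
    rw [Circle.coe_mul, Circle.coe_mul, dist_eq_norm, dist_eq_norm, ← mul_sub, norm_mul,
      Circle.norm_coe, one_mul]⟩

lemma Circle.dist_le_two (a b : Circle) : dist a b ≤ 2 :=
  calc dist a b = ‖(a : ℂ) - b‖ := dist_eq_norm (a : ℂ) b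
    _ ≤ ‖(a : ℂ)‖ + ‖(b : ℂ)‖ := norm_sub_le _ _
    _ = 2 := by rw [Circle.norm_coe, Circle.norm_coe, one_add_one_eq_two]

lemma exists_pos_dist_pow_one_lt {G : Type*} [Group G] [PseudoMetricSpace G] [CompactSpace G]
    [IsIsometricSMul G G] (g : G) {ε : ℝ} (hε : 0 < ε) : ∃ m, 0 < m ∧ dist (g ^ m) 1 < ε := by
  obtain ⟨_, φ, hφ, hlim⟩ := CompactSpace.tendsto_subseq fun k => g ^ k
  obtain ⟨N, hN⟩ := Metric.cauchySeq_iff'.1 hlim.cauchySeq ε hε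
  have hlt : φ N < φ (N + 1) := hφ N.lt_succ_self
  refine ⟨φ (N + 1) - φ N, Nat.sub_pos_of_lt hlt, ?_⟩
  calc dist (g ^ (φ (N + 1) - φ N)) 1
      = dist (g ^ φ N * g ^ (φ (N + 1) - φ N)) (g ^ φ N * 1) := (dist_mul_left _ _ _).symm
    _ = dist (g ^ φ (N + 1)) (g ^ φ N) := by rw [← pow_add, Nat.add_sub_cancel' hlt.le, mul_one]
    _ < ε := hN (N + 1) N.le_succ

lemma exists_gt_forall_dist_circleExp_one_lt {ι : Type*} [Fintype ι] (θ : ι → ℝ) (τ : ℝ)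
    {η : ℝ} (hη : 0 < η) : ∃ T > τ, ∀ i, dist (Circle.exp (θ i * T)) 1 < η := by
  obtain ⟨m, hm, hdist⟩ :=
    exists_pos_dist_pow_one_lt (fun i => Circle.exp (θ i * (|τ| + 1))) hη
  refine ⟨m * (|τ| + 1), ?_, fun i => ?_⟩
  · have : (1 : ℝ) ≤ m := by exact_mod_cast hm
    nlinarith [le_abs_self τ, abs_nonneg τ]
  · simpa [← Circle.exp_natCast_mul, mul_left_comm] using (dist_pi_lt_iff hη).1 hdist i

lemma Isometry.dist_self_apply_le {α : Type*} [PseudoMetricSpace α] {f : α → α} (hf : Isometry f)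
    (x y : α) : dist x (f x) ≤ 2 * dist x y + dist y (f y) :=
  calc dist x (f x) ≤ dist x y + dist y (f y) + dist (f y) (f x) := dist_triangle4 _ _ _ _
    _ = 2 * dist x y + dist y (f y) := by rw [hf.dist_eq, dist_comm y x]; ring

lemma timeEvol_apply (E : ℕ → ℝ) (t : ℝ) (c : lp (fun _ : ℕ => ℂ) 2) (n : ℕ) :
    timeEvol E t c n = Circle.exp (-(E n * t)) * c n := rfl

lemma isometry_timeEvol (E : ℕ → ℝ) (t : ℝ) : Isometry (timeEvol E t) :=
  Isometry.of_dist_eq fun a b => by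
    simp only [dist_eq_norm, lp.norm_eq_tsum_rpow (by norm_num : 0 < (2 : ℝ≥0∞).toReal)]
    congr! 3 with n
    simp only [lp.coeFn_sub, Pi.sub_apply, timeEvol_apply, ← mul_sub, norm_mul, Circle.norm_coe,
      one_mul]

lemma norm_sub_timeEvol_apply (E : ℕ → ℝ) (t : ℝ) (c : lp (fun _ : ℕ => ℂ) 2) (n : ℕ) :
    ‖(c - timeEvol E t c) n‖ = dist (Circle.exp (-(E n * t))) 1 * ‖c n‖ := by
  rw [lp.coeFn_sub, Pi.sub_apply, timeEvol_apply, ← one_sub_mul, norm_mul, norm_sub_rev,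
    ← Circle.coe_one, ← dist_eq_norm]
  rfl

lemma norm_sub_timeEvol_sq_le (E : ℕ → ℝ) (T : ℝ) (c : lp (fun _ : ℕ => ℂ) 2) (N : ℕ) {η : ℝ}
    (hN : ∀ n < N, dist (Circle.exp (-(E n * T))) 1 ≤ η) :
    ‖c - timeEvol E T c‖ ^ 2 ≤ η ^ 2 * ‖c‖ ^ 2 + 4 * ∑' n, ‖c (n + N)‖ ^ 2 := by
  have hc := lp.summable_norm_sq c
  have head : ∑ n ∈ Finset.range N, ‖(c - timeEvol E T c) n‖ ^ 2 ≤ η ^ 2 * ‖c‖ ^ 2 := by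
    calc ∑ n ∈ Finset.range N, ‖(c - timeEvol E T c) n‖ ^ 2
        ≤ ∑ n ∈ Finset.range N, η ^ 2 * ‖c n‖ ^ 2 := by
          refine Finset.sum_le_sum fun n hn => ?_
          rw [norm_sub_timeEvol_apply, mul_pow]
          gcongr
          exact hN n (Finset.mem_range.1 hn)
      _ ≤ η ^ 2 * ‖c‖ ^ 2 := by
          rw [← Finset.mul_sum, lp.norm_sq_eq_tsum]
          gcongr
          exact hc.sum_le_tsum _ fun n _ => by positivity
  have tail : ∑' n, ‖(c - timeEvol E T c) (n + N)‖ ^ 2 ≤ 4 * ∑' n, ‖c (n + N)‖ ^ 2 := by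
    rw [← tsum_mul_left]
    refine ((summable_nat_add_iff N).2 (lp.summable_norm_sq _)).tsum_le_tsum (fun n => ?_)
      (((summable_nat_add_iff N).2 hc).mul_left 4)
    rw [norm_sub_timeEvol_apply, mul_pow]
    gcongr ?_ * _
    calc dist (Circle.exp (-(E (n + N) * T))) 1 ^ 2 ≤ 2 ^ 2 := by
          gcongr; exact Circle.dist_le_two _ _
      _ = 4 := by norm_num
  rw [lp.norm_sq_eq_tsum, ← (lp.summable_norm_sq _).sum_add_tsum_nat_add N]
  exact add_le_add head tail

lemma eventually_norm_sub_timeEvol_lt (E : ℕ → ℝ) (c : lp (fun _ : ℕ => ℂ) 2) {ε : ℝ}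
    (hε : 0 < ε) :
    ∀ᶠ p : ℕ × ℝ in atTop ×ˢ 𝓝 0, ∀ T,
      (∀ n < p.1, dist (Circle.exp (-(E n * T))) 1 ≤ p.2) → ‖c - timeEvol E T c‖ < ε := by
  have hlim : Tendsto (fun p : ℕ × ℝ => p.2 ^ 2 * ‖c‖ ^ 2 + 4 * ∑' n, ‖c (n + p.1)‖ ^ 2)
      (atTop ×ˢ 𝓝 0) (𝓝 0) := by
    have hhead : Tendsto (fun p : ℕ × ℝ => p.2 ^ 2 * ‖c‖ ^ 2) (atTop ×ˢ 𝓝 0) (𝓝 0) := by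
      simpa using ((continuous_pow 2).tendsto (0 : ℝ)).comp tendsto_snd |>.mul_const (‖c‖ ^ 2)
    have htail := ((tendsto_sum_nat_add fun n => ‖c n‖ ^ 2).comp
      (tendsto_fst (f := atTop) (g := 𝓝 (0 : ℝ)))).const_mul 4
    simpa using hhead.add htail
  filter_upwards [hlim.eventually (gt_mem_nhds (pow_pos hε 2))] with p hp T hT
  exact lt_of_pow_lt_pow_left₀ 2 hε.le ((norm_sub_timeEvol_sq_le E T c p.1 hT).trans_lt hp)

lemma exists_gt_forall_norm_sub_timeEvol_lt (E : ℕ → ℝ) {s : Set (lp (fun _ : ℕ => ℂ) 2)}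
    (hs : s.Finite) (τ : ℝ) {ε : ℝ} (hε : 0 < ε) :
    ∃ T > τ, ∀ c ∈ s, ‖c - timeEvol E T c‖ < ε := by
  have hgood : ∀ᶠ p : ℕ × ℝ in atTop ×ˢ 𝓝[>] 0, 0 < p.2 ∧ ∀ c ∈ s, ∀ T,
      (∀ n < p.1, dist (Circle.exp (-(E n * T))) 1 ≤ p.2) → ‖c - timeEvol E T c‖ < ε :=
    (tendsto_snd.eventually self_mem_nhdsWithin).and <|
      (hs.eventually_all.2 fun c _ => eventually_norm_sub_timeEvol_lt E c hε).filter_mono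
        (prod_mono le_rfl nhdsWithin_le_nhds)
  obtain ⟨⟨N, η⟩, hη, hN⟩ := hgood.exists
  obtain ⟨T, hT, hphase⟩ := exists_gt_forall_dist_circleExp_one_lt (fun n : Fin N => -E n) τ hη
  exact ⟨T, hT, fun c hc => hN c hc T fun n hn => by simpa using (hphase ⟨n, hn⟩).le⟩

theorem uniform_recurrence_compact_general (E : ℕ → ℝ) (X : Set (lp (fun _ : ℕ => ℂ) 2))
    (hX : IsCompact X) (δ τ : ℝ) (hδ : 0 < δ) :
    ∃ T : ℝ, T > τ ∧ ∀ c ∈ X, ‖c - timeEvol E T c‖ < δ := by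
  obtain ⟨net, -, hnet, hcover⟩ := hX.finite_cover_balls (by positivity : 0 < δ / 3)
  obtain ⟨T, hT, hrec⟩ :=
    exists_gt_forall_norm_sub_timeEvol_lt E hnet τ (by positivity : 0 < δ / 3)
  refine ⟨T, hT, fun c hc => ?_⟩
  obtain ⟨x, hx, hcx⟩ := Set.mem_iUnion₂.1 (hcover hc)
  have hbound := (isometry_timeEvol E T).dist_self_apply_le c x
  rw [dist_eq_norm c, dist_eq_norm x] at hbound
  linarith [Metric.mem_ball.1 hcx, hrec x hx]

/-- uniform recurrence on compact sets. -/
theorem uniform_recurrence_compact (E : ℕ → ℝ) (X : Set (lp (fun _ : ℕ => ℂ) 2))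
    (hX : IsCompact X) (δ τ : ℝ) (hδ : 0 < δ) (hτ : 0 < τ) :
    ∃ T : ℝ, T > τ ∧ ∀ c ∈ X, ‖c - timeEvol E T c‖ < δ :=
  uniform_recurrence_compact_general E X hX δ τ hδ
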